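/- arXiv:1402.3817 — 6 statements merged into one kernel-verified Lean document; each statement's English description precedes it below -/
import Mathlib

section
/- Let S be an inverse semigroup with minimal idempotent ε. Then the map a ↦ ε a ε is an idempotent semigroup homomorphism from S onto the maximal subgroup ε S ε, and a σ b if and only if ε a ε = ε b ε. -/
/-!
A minimum idempotent `ε` is central: for `a` with `a * b * a = a`, both `b * ε * a` and
`a * ε * b` are idempotents, and absorbing them into `ε` turns `ε * a * ε` into `a * ε` on one
side and into `ε * a` on the other. Hence `a ↦ ε * a * ε = ε * a` is a homomorphism onto
`ε S ε`, where `x⁻¹ = ε * inv x * ε` because `x * inv x` and `inv x * x` collapse to `ε`.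
Finally `f * a = f * b` for an idempotent `f` gives `ε * a = ε * f * a = ε * f * b = ε * b`.
-/

section MinimumIdempotent

variable {S : Type*} [Semigroup S] {ε a b : S}

lemma isIdempotentElem_mul_of_mul_mul_eq (h : a * b * a = a) : IsIdempotentElem (a * b) := by
  rw [IsIdempotentElem, ← mul_assoc, h]

lemma isIdempotentElem_mul_of_mul_mul_eq' (h : a * b * a = a) : IsIdempotentElem (b * a) := by
  rw [IsIdempotentElem, mul_assoc, ← mul_assoc a, h]

lemma isIdempotentElem_mul_mul_of_mul_eq (hε : IsIdempotentElem ε) (h : ε * (a * b) = ε) :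
    IsIdempotentElem (b * ε * a) := by
  calc b * ε * a * (b * ε * a) = b * (ε * (a * b)) * (ε * a) := by simp only [mul_assoc]
    _ = b * ε * a := by rw [h, mul_assoc b, hε.mul_self_mul, ← mul_assoc]

variable (hε : IsIdempotentElem ε) (hmin : ∀ e, IsIdempotentElem e → ε * e = ε ∧ e * ε = ε)
include hε hmin

lemma commute_of_mul_mul_eq (h : a * b * a = a) : Commute ε a := by
  have hab := hmin _ (isIdempotentElem_mul_of_mul_mul_eq h)
  have hba := hmin _ (isIdempotentElem_mul_of_mul_mul_eq' h)
  have right : ε * a * ε = a * ε := by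
    calc ε * a * ε = a * b * ε * a * ε := by rw [hab.2]
      _ = a * ((b * ε * a) * ε) := by simp only [mul_assoc]
      _ = a * ε := by rw [(hmin _ (isIdempotentElem_mul_mul_of_mul_eq hε hab.1)).2]
  have left : ε * a * ε = ε * a := by
    calc ε * a * ε = ε * a * (ε * (b * a)) := by rw [hba.1]
      _ = (ε * (a * ε * b)) * a := by simp only [mul_assoc]
      _ = ε * a := by rw [(hmin _ (isIdempotentElem_mul_mul_of_mul_eq hε hba.1)).1]
  exact left.symm.trans right

omit hmin in
lemma mul_mul_self_eq_of_commute (hc : Commute ε a) : ε * a * ε = ε * a := by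
  rw [mul_assoc, ← hc.eq, ← mul_assoc, hε.eq]

omit hmin in
lemma mul_mul_self_mul_eq_of_commute (hc : Commute ε b) :
    ε * (a * b) * ε = ε * a * ε * (ε * b * ε) := by
  calc ε * (a * b) * ε = ε * a * (ε * b) := by simp only [mul_assoc, hc.eq]
    _ = ε * a * ε * (ε * b) := by rw [mul_assoc (ε * a) ε, hε.mul_self_mul]
    _ = ε * a * ε * (ε * b * ε) := by rw [mul_mul_self_eq_of_commute hε hc]

omit hε in
lemma mul_mul_mul_self_eq_of_mul_mul_eq {x c : S} (hx : x * ε = x) (h : x * c * x = x) :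
    x * (ε * c * ε) = ε := by
  rw [← mul_assoc, ← mul_assoc, hx, (hmin _ (isIdempotentElem_mul_of_mul_mul_eq h)).2]

omit hε in
lemma mul_mul_self_mul_eq_of_mul_mul_eq {x c : S} (hx : ε * x = x) (h : x * c * x = x) :
    ε * c * ε * x = ε := by
  rw [mul_assoc, hx, mul_assoc, (hmin _ (isIdempotentElem_mul_of_mul_mul_eq' h)).1]

lemma exists_isIdempotentElem_mul_eq_iff (ha : Commute ε a) (hb : Commute ε b) :
    (∃ f, IsIdempotentElem f ∧ f * a = f * b) ↔ ε * a * ε = ε * b * ε := by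
  constructor
  · rintro ⟨f, hf, hfab⟩
    have hεf : ε * f = ε := (hmin f hf).1
    calc ε * a * ε = ε * f * a * ε := by rw [hεf]
      _ = ε * f * b * ε := by rw [mul_assoc ε f a, hfab, ← mul_assoc]
      _ = ε * b * ε := by rw [hεf]
  · intro h
    refine ⟨ε, hε, ?_⟩
    rwa [mul_mul_self_eq_of_commute hε ha, mul_mul_self_eq_of_commute hε hb] at h

end MinimumIdempotent

theorem retraction_onto_maximal_subgroup_general {S : Type*} [Semigroup S] (inv : S → S)
    (h1 : ∀ x : S, x * inv x * x = x)
    (ε : S) (hε : ε * ε = ε)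
    (hmin : ∀ e : S, e * e = e → ε * e = ε ∧ e * ε = ε) :
    (∀ a b : S, ε * (a * b) * ε = (ε * a * ε) * (ε * b * ε)) ∧
    (∀ a : S, ε * (ε * a * ε) * ε = ε * a * ε) ∧
    (∀ x : S, (∃ s : S, x = ε * s * ε) → (ε * x = x ∧ x * ε = x ∧
        ∃ y : S, (∃ t : S, y = ε * t * ε) ∧ x * y = ε ∧ y * x = ε)) ∧
    (∀ a b : S, (∃ f : S, f * f = f ∧ f * a = f * b) ↔ ε * a * ε = ε * b * ε) := by
  have central (a : S) : Commute ε a := commute_of_mul_mul_eq hε hmin (h1 a)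
  refine ⟨fun a b ↦ mul_mul_self_mul_eq_of_commute hε (central b), fun a ↦ ?_, ?_,
    fun a b ↦ exists_isIdempotentElem_mul_eq_iff hε hmin (central a) (central b)⟩
  · simp only [mul_assoc, IsIdempotentElem.mul_self_mul hε, hε]
  · rintro x ⟨s, rfl⟩
    have hl : ε * (ε * s * ε) = ε * s * ε := by rw [← mul_assoc, ← mul_assoc, hε]
    have hr : ε * s * ε * ε = ε * s * ε := by rw [mul_assoc, hε]
    exact ⟨hl, hr, _, ⟨_, rfl⟩, mul_mul_mul_self_eq_of_mul_mul_eq hmin hr (h1 _),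
      mul_mul_self_mul_eq_of_mul_mul_eq hmin hl (h1 _)⟩

/-- Let `S` be an inverse semigroup with minimal idempotent `ε`.  Then `a ↦ ε * a * ε`
is an idempotent semigroup homomorphism from `S` onto `ε S ε`; the set `ε S ε` is a
group with identity `ε` (the maximal subgroup at `ε`); and `a σ b` iff
`ε * a * ε = ε * b * ε`, where `σ` is the minimum group congruence. -/
theorem retraction_onto_maximal_subgroup {S : Type*} [Semigroup S] (inv : S → S)
    (h1 : ∀ x : S, x * inv x * x = x)
    (h2 : ∀ x : S, inv x * x * inv x = inv x)
    (h3 : ∀ x y : S, x * y * x = x → y * x * y = y → y = inv x)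
    (ε : S) (hε : ε * ε = ε)
    (hmin : ∀ e : S, e * e = e → ε * e = ε ∧ e * ε = ε) :
    (∀ a b : S, ε * (a * b) * ε = (ε * a * ε) * (ε * b * ε)) ∧
    (∀ a : S, ε * (ε * a * ε) * ε = ε * a * ε) ∧
    (∀ x : S, (∃ s : S, x = ε * s * ε) → (ε * x = x ∧ x * ε = x ∧
        ∃ y : S, (∃ t : S, y = ε * t * ε) ∧ x * y = ε ∧ y * x = ε)) ∧
    (∀ a b : S, (∃ f : S, f * f = f ∧ f * a = f * b) ↔ ε * a * ε = ε * b * ε) :=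
  retraction_onto_maximal_subgroup_general inv h1 ε hε hmin
end

section
/- The free Clifford monoid CM_X is an inverse monoid, with the inverse of (u, A) given by (u⁻¹, A). -/
/-! `CM_X` embeds in the product of the free group `FG_X` with the semilattice `(P(X), ∪)`, and
the inverse-monoid axioms hold componentwise: in the group `u v u = u` forces `v = u⁻¹`, and in
the semilattice `A ∪ B ∪ A = A` and `B ∪ A ∪ B = B` force `A = B`. -/

/-- The content of an element of a free group: the set of generators occurring in
its reduced word. -/
def FreeGroup.content {X : Type*} [DecidableEq X] (u : FreeGroup X) : Set X :=
  {x | ∃ b : Bool, (x, b) ∈ u.toWord}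

/-- The free Clifford monoid on `X`: pairs `(u, A)` of an element of the free group
and a subset of `X` containing the content of `u`. -/
def FreeCliffordMonoid (X : Type*) [DecidableEq X] :=
  {p : FreeGroup X × Set X // FreeGroup.content p.1 ⊆ p.2}

namespace FreeCliffordMonoid

variable {X : Type*} [DecidableEq X]

theorem content_mul (u v : FreeGroup X) :
    FreeGroup.content (u * v) ⊆ FreeGroup.content u ∪ FreeGroup.content v := by
  rintro x ⟨b, hb⟩
  have := (FreeGroup.toWord_mul_sublist u v).mem hb
  rcases List.mem_append.1 this with h | h
  · exact Or.inl ⟨b, h⟩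
  · exact Or.inr ⟨b, h⟩

instance : Mul (FreeCliffordMonoid X) :=
  ⟨fun p q => ⟨(p.1.1 * q.1.1, p.1.2 ∪ q.1.2),
    fun x hx => (content_mul p.1.1 q.1.1 hx).imp (@p.2 x) (@q.2 x)⟩⟩

instance : One (FreeCliffordMonoid X) :=
  ⟨⟨(1, ∅), by intro x hx; obtain ⟨b, hb⟩ := hx; simp [FreeGroup.toWord_one] at hb⟩⟩

@[simp] theorem mul_def (p q : FreeCliffordMonoid X) :
    p * q = ⟨(p.1.1 * q.1.1, p.1.2 ∪ q.1.2), (p * q).2⟩ := rfl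

instance : Monoid (FreeCliffordMonoid X) where
  mul_assoc p q r := Subtype.ext (Prod.ext (mul_assoc _ _ _) (Set.union_assoc _ _ _))
  one_mul p := Subtype.ext (Prod.ext (one_mul _) (Set.empty_union _))
  mul_one p := Subtype.ext (Prod.ext (mul_one _) (Set.union_empty _))

end FreeCliffordMonoid

/-- The content of an inverse. -/
theorem FreeCliffordMonoid.content_inv {X : Type*} [DecidableEq X] (u : FreeGroup X) :
    FreeGroup.content u⁻¹ ⊆ FreeGroup.content u := by
  rintro x ⟨b, hb⟩
  rw [FreeGroup.toWord_inv, FreeGroup.invRev] at hb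
  obtain ⟨⟨y, c⟩, hy, h⟩ := List.mem_map.1 (List.mem_reverse.1 hb)
  obtain ⟨rfl, -⟩ : y = x ∧ c = !b := by simpa using h
  exact ⟨c, hy⟩

/-- The candidate inverse of `(u, A)`, namely `(u⁻¹, A)`. -/
def FreeCliffordMonoid.pinv {X : Type*} [DecidableEq X] (p : FreeCliffordMonoid X) :
    FreeCliffordMonoid X :=
  ⟨(p.1.1⁻¹, p.1.2), fun x hx => p.2 (content_inv p.1.1 hx)⟩

theorem eq_inv_of_mul_mul_eq_self {G : Type*} [Group G] {u v : G} (h : u * v * u = u) :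
    v = u⁻¹ :=
  eq_inv_of_mul_eq_one_right (mul_eq_right.1 h)

theorem le_of_sup_sup_eq_self {α : Type*} [SemilatticeSup α] {a b : α} (h : a ⊔ b ⊔ a = a) :
    b ≤ a :=
  (le_sup_right.trans le_sup_left).trans_eq h

namespace FreeCliffordMonoid

variable {X : Type*} [DecidableEq X]

theorem ext_iff' {p q : FreeCliffordMonoid X} : p = q ↔ p.1.1 = q.1.1 ∧ p.1.2 = q.1.2 :=
  Subtype.ext_iff.trans Prod.ext_iff

@[simp] theorem fst_mul (p q : FreeCliffordMonoid X) : (p * q).1.1 = p.1.1 * q.1.1 := rfl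

@[simp] theorem snd_mul (p q : FreeCliffordMonoid X) : (p * q).1.2 = p.1.2 ∪ q.1.2 := rfl

@[simp] theorem fst_pinv (p : FreeCliffordMonoid X) : p.pinv.1.1 = p.1.1⁻¹ := rfl

@[simp] theorem snd_pinv (p : FreeCliffordMonoid X) : p.pinv.1.2 = p.1.2 := rfl

@[simp] theorem pinv_pinv (p : FreeCliffordMonoid X) : p.pinv.pinv = p :=
  ext_iff'.2 ⟨inv_inv _, rfl⟩

theorem mul_pinv_mul (p : FreeCliffordMonoid X) : p * p.pinv * p = p :=
  ext_iff'.2 ⟨by simp only [fst_mul, fst_pinv, mul_inv_cancel, one_mul],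
    by simp only [snd_mul, snd_pinv, Set.union_self]⟩

theorem pinv_mul_pinv (p : FreeCliffordMonoid X) : p.pinv * p * p.pinv = p.pinv := by
  simpa only [pinv_pinv] using mul_pinv_mul p.pinv

theorem eq_pinv_of_mul_mul {p r : FreeCliffordMonoid X} (hp : p * r * p = p)
    (hr : r * p * r = r) : r = p.pinv := by
  obtain ⟨hu, hA⟩ := ext_iff'.1 hp
  obtain ⟨-, hB⟩ := ext_iff'.1 hr
  exact ext_iff'.2 ⟨eq_inv_of_mul_mul_eq_self hu,
    (le_of_sup_sup_eq_self hA).antisymm (le_of_sup_sup_eq_self hB)⟩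

end FreeCliffordMonoid

/-- The free Clifford monoid is an inverse monoid: every element `(u, A)` has as its
unique generalized inverse the element `(u⁻¹, A)`. -/
theorem FreeCliffordMonoid.is_inverse_monoid {X : Type*} [DecidableEq X]
    (p : FreeCliffordMonoid X) :
    p * p.pinv * p = p ∧ p.pinv * p * p.pinv = p.pinv ∧
    ∀ r : FreeCliffordMonoid X, p * r * p = p → r * p * r = r → r = p.pinv :=
  ⟨mul_pinv_mul p, pinv_mul_pinv p, fun _ => eq_pinv_of_mul_mul⟩
end

section
/- The free Clifford monoid CM_X satisfies the universal property: for every group H and every function f : X → H, there is a unique monoid homomorphism φ : CM_X → H extending f along the map ι : X → CM_X, ι(x) = (x, {x}). -/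
/-- The canonical embedding `ι : X → CM_X`, `x ↦ (x, {x})`. -/
def FreeCliffordMonoid.iota {X : Type*} [DecidableEq X] (x : X) : FreeCliffordMonoid X :=
  ⟨(FreeGroup.of x, {x}), by
    rintro y ⟨b, hb⟩
    rw [FreeGroup.toWord_of] at hb
    simp_all⟩

/-! A homomorphism `ψ` from `CM_X` to a cancellative monoid kills every idempotent `(1, A)`, and
`(u, A) = (1, A) (u, c(u))`; so `ψ` only sees the free-group coordinate and factors through the
projection `CM_X → FG_X` via a group homomorphism `FG_X → H`, which is determined by its values
on the generators. -/

namespace FreeGroup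

variable {X : Type*} [DecidableEq X]

@[simp] theorem content_one : content (1 : FreeGroup X) = ∅ := by
  simp [content, toWord_one]

@[simp] theorem content_of (x : X) : content (of x) = {x} := by
  ext y
  simp [content, toWord_of]

end FreeGroup

namespace FreeCliffordMonoid

variable {X : Type*} [DecidableEq X]

def ofFreeGroup (u : FreeGroup X) : FreeCliffordMonoid X :=
  ⟨(u, FreeGroup.content u), subset_rfl⟩

def toFreeGroup : FreeCliffordMonoid X →* FreeGroup X where
  toFun p := p.1.1
  map_one' := rfl
  map_mul' _ _ := rfl

theorem ofFreeGroup_of (x : X) : ofFreeGroup (FreeGroup.of x) = iota x :=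
  Subtype.ext (Prod.ext rfl (FreeGroup.content_of x))

def ofSet (A : Set X) : FreeCliffordMonoid X :=
  ⟨(1, A), by simp⟩

theorem isIdempotentElem_ofSet (A : Set X) : IsIdempotentElem (ofSet A) :=
  Subtype.ext (Prod.ext (one_mul 1) (Set.union_self A))

theorem ofSet_mul_ofFreeGroup (p : FreeCliffordMonoid X) :
    ofSet p.1.2 * ofFreeGroup p.1.1 = p :=
  Subtype.ext (Prod.ext (one_mul _) (Set.union_eq_self_of_subset_right p.2))

variable {M : Type*} [CancelMonoid M]

theorem map_eq_map_ofFreeGroup (ψ : FreeCliffordMonoid X →* M) (p : FreeCliffordMonoid X) :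
    ψ p = ψ (ofFreeGroup p.1.1) := by
  have hone : ψ (ofSet p.1.2) = 1 :=
    IsIdempotentElem.iff_eq_one.mp ((isIdempotentElem_ofSet _).map ψ)
  rw [← congrArg ψ (ofSet_mul_ofFreeGroup p), map_mul, hone, one_mul]

def descend (ψ : FreeCliffordMonoid X →* M) : FreeGroup X →* M where
  toFun u := ψ (ofFreeGroup u)
  map_one' := (map_eq_map_ofFreeGroup ψ 1).symm.trans (map_one ψ)
  map_mul' u v := by
    rw [← map_mul, map_eq_map_ofFreeGroup ψ (ofFreeGroup u * ofFreeGroup v)]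
    rfl

theorem descend_comp_toFreeGroup (ψ : FreeCliffordMonoid X →* M) :
    (descend ψ).comp toFreeGroup = ψ := by
  ext p
  exact (map_eq_map_ofFreeGroup ψ p).symm

end FreeCliffordMonoid

/-- Universal property of the free Clifford monoid: for every group `H` and every map
`f : X → H` there is a unique monoid homomorphism `φ : CM_X → H` with `φ ∘ ι = f`,
where `ι x = (x, {x})`. -/
theorem FreeCliffordMonoid.universal_property {X : Type*} [DecidableEq X]
    {H : Type*} [Group H] (f : X → H) :
    ∃! φ : FreeCliffordMonoid X →* H, ∀ x : X, φ (FreeCliffordMonoid.iota x) = f x := by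
  refine ⟨(FreeGroup.lift f).comp toFreeGroup, fun x => FreeGroup.lift_apply_of, ?_⟩
  intro ψ hψ
  have hdescend : descend ψ = FreeGroup.lift f :=
    FreeGroup.ext_hom _ _ fun x => by
      rw [FreeGroup.lift_apply_of, ← hψ, ← ofFreeGroup_of]
      rfl
  rw [← descend_comp_toFreeGroup ψ, hdescend]
end

section
/- Let S be an inverse monoid and μ : S → G = S/σ the canonical surjection onto the maximum group image. Suppose S has a minimal idempotent ε. Then the kernel of the induced ring homomorphism μ̃ : ℤS → ℤG between monoid rings is generated as a left ideal by the elements s − sε for s ∈ S; more precisely, Ker(μ̃) is generated as an abelian group by the elements s − sε, s ∈ S. -/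
/-!
Write `r s = s ε`. Because `ε` lies below every idempotent, `μ s = μ t` holds exactly when
`s ε = t ε`, so `r` is constant on the fibres of `μ` and preserves them. Hence `r̃ : ℤS → ℤS`
factors through `μ̃` and kills `Ker μ̃`, while `x - r̃ x` always lies in the subgroup generated
by the `s - s ε`; so every `x ∈ Ker μ̃`, being equal to `x - r̃ x`, lies there too.
-/

open MonoidAlgebra

section Retraction

variable {α β : Type*}

lemma mapDomain_comp_apply {γ : Type*} (f : α → β) (g : β → γ) (x : MonoidAlgebra ℤ α) :
    mapDomain (g ∘ f) x = mapDomain g (mapDomain f x) := by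
  ext
  simp [Finsupp.mapDomain_comp]

lemma sub_mapDomain_mem_closure (r : α → α) (x : MonoidAlgebra ℤ α) :
    x - mapDomain r x ∈ AddSubgroup.closure {y | ∃ a, y = single a 1 - single (r a) 1} := by
  induction x using MonoidAlgebra.induction_linear with
  | zero => simp
  | add x y hx hy =>
    rw [mapDomain_add, add_sub_add_comm]
    exact add_mem hx hy
  | single a n =>
    have h : single a n - single (r a) n = n • (single a 1 - single (r a) 1) := by
      simp [smul_sub]
    rw [mapDomain_single, h]
    apply zsmul_mem
    exact AddSubgroup.subset_closure ⟨a, rfl⟩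

theorem mapDomain_eq_zero_iff_mem_closure [Nonempty α] {f : α → β} {r : α → α}
    (hfr : ∀ a, f (r a) = f a) (hr : ∀ a b, f a = f b → r a = r b) (x : MonoidAlgebra ℤ α) :
    mapDomain f x = 0 ↔
      x ∈ AddSubgroup.closure {y | ∃ a, y = single a 1 - single (r a) 1} := by
  constructor
  · intro hx
    have hfactor : r = (r ∘ Function.invFun f) ∘ f :=
      funext fun a => hr _ _ (Function.invFun_eq ⟨a, rfl⟩).symm
    have hrx : mapDomain r x = 0 := by
      rw [hfactor, mapDomain_comp_apply, hx, mapDomain_zero]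
    simpa [hrx] using sub_mapDomain_mem_closure r x
  · have hle : AddSubgroup.closure {y | ∃ a, y = single a 1 - single (r a) 1} ≤
        (mapDomainLinearMap ℤ ℤ f).toAddMonoidHom.ker := by
      rw [AddSubgroup.closure_le]
      rintro _ ⟨a, rfl⟩
      simp [hfr]
    exact fun hx => hle hx

end Retraction

section MinimalIdempotent

variable {S G : Type*} [Monoid S] [Group G] {μ : S →* G} {ε : S}

lemma map_mul_eq_left_of_isIdempotentElem (hε : IsIdempotentElem ε) (s : S) :
    μ (s * ε) = μ s := by
  rw [map_mul, mul_eq_left.mp (hε.map μ), mul_one]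

lemma mul_eq_mul_of_map_eq (hmin : ∀ e, IsIdempotentElem e → e * ε = ε)
    (hσ : ∀ a b, μ a = μ b → ∃ e, IsIdempotentElem e ∧ a * e = b * e) {s t : S}
    (h : μ s = μ t) : s * ε = t * ε := by
  obtain ⟨e, he, hst⟩ := hσ s t h
  rw [← hmin e he, ← mul_assoc, hst, mul_assoc]

end MinimalIdempotent

theorem ker_of_augmentation_to_maxGroupImage_general {S G : Type*} [Monoid S] [Group G]
    (ε : S) (hε : ε * ε = ε)
    (hmin : ∀ e : S, e * e = e → ε * e = ε ∧ e * ε = ε)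
    (μ : S →* G)
    (hσ : ∀ a b : S, μ a = μ b ↔ ∃ e : S, e * e = e ∧ a * e = b * e) :
    AddMonoidHom.ker (MonoidAlgebra.mapDomainRingHom ℤ μ :
        MonoidAlgebra ℤ S →+* MonoidAlgebra ℤ G).toAddMonoidHom =
      AddSubgroup.closure {x : MonoidAlgebra ℤ S |
        ∃ s : S, x = MonoidAlgebra.of ℤ S s - MonoidAlgebra.of ℤ S (s * ε)} := by
  ext x
  simp only [AddMonoidHom.mem_ker, RingHom.toAddMonoidHom_eq_coe, AddMonoidHom.coe_coe,
    mapDomainRingHom_apply, of_apply]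
  exact mapDomain_eq_zero_iff_mem_closure (map_mul_eq_left_of_isIdempotentElem hε)
    (fun _ _ => mul_eq_mul_of_map_eq (fun e he => (hmin e he).2) (fun a b => (hσ a b).1)) x

/-- Let `S` be an inverse monoid with a minimal idempotent `ε`, and let `μ : S → G` be
the canonical surjection onto its maximum group image (so `μ a = μ b` iff `a σ b`).
Then the kernel of the induced ring homomorphism `μ̃ : ℤS → ℤG` of monoid rings is
generated, as an abelian group, by the elements `s - s ε` for `s ∈ S`. -/
theorem ker_of_augmentation_to_maxGroupImage {S G : Type*} [Monoid S] [Group G]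
    (inv : S → S)
    (h1 : ∀ x : S, x * inv x * x = x)
    (h2 : ∀ x : S, inv x * x * inv x = inv x)
    (h3 : ∀ x y : S, x * y * x = x → y * x * y = y → y = inv x)
    (ε : S) (hε : ε * ε = ε)
    (hmin : ∀ e : S, e * e = e → ε * e = ε ∧ e * ε = ε)
    (μ : S →* G) (hsurj : Function.Surjective μ)
    (hσ : ∀ a b : S, μ a = μ b ↔ ∃ e : S, e * e = e ∧ a * e = b * e) :
    AddMonoidHom.ker (MonoidAlgebra.mapDomainRingHom ℤ μ :
        MonoidAlgebra ℤ S →+* MonoidAlgebra ℤ G).toAddMonoidHom =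
      AddSubgroup.closure {x : MonoidAlgebra ℤ S |
        ∃ s : S, x = MonoidAlgebra.of ℤ S s - MonoidAlgebra.of ℤ S (s * ε)} :=
  ker_of_augmentation_to_maxGroupImage_general ε hε hmin μ hσ
end

section
/- Let J : S → G be the surjection of an inverse monoid S onto its maximum group image G. The comma category J ↓ *_G (objects: elements a ∈ G; morphisms s : a → b whenever b·μ(s) = a in G, for s ∈ S) is a filtered category. -/
/-! Idempotents of an inverse monoid commute. If two parallel morphisms `s t : a → b` are given,
then `μ s = μ t`, so `s e = t e` for some idempotent `e`; with `x = s e = t e` the idempotent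
`r = x x⁻¹` satisfies `r s = x = r t`, so it equalizes them. Common targets of two objects come
from surjectivity of `μ`. -/

/-- `inv` is the inversion of an inverse semigroup: every `x` has `inv x` as its unique inverse. -/
structure IsInverseSemigroupInv {S : Type*} [Semigroup S] (inv : S → S) : Prop where
  mul_inv_mul : ∀ x : S, x * inv x * x = x
  inv_mul_inv : ∀ x : S, inv x * x * inv x = inv x
  eq_inv : ∀ x y : S, x * y * x = x → y * x * y = y → y = inv x

namespace IsInverseSemigroupInv

variable {S : Type*} [Semigroup S] {inv : S → S}

theorem inv_eq_self (hS : IsInverseSemigroupInv inv) {e : S} (he : IsIdempotentElem e) :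
    inv e = e :=
  (hS.eq_inv e e (by rw [he.eq, he.eq]) (by rw [he.eq, he.eq])).symm

theorem isIdempotentElem_mul (hS : IsInverseSemigroupInv inv) {e f : S}
    (he : IsIdempotentElem e) (hf : IsIdempotentElem f) : IsIdempotentElem (e * f) := by
  set g := inv (e * f)
  -- `f g e` is an inverse of `e f`, hence equal to `g`
  have hfge : f * g * e = g := by
    apply hS.eq_inv
    · calc e * f * (f * g * e) * (e * f) = e * f * g * (e * f) := by
            simp only [mul_assoc, he.mul_self_mul, hf.mul_self_mul]
        _ = e * f := hS.mul_inv_mul (e * f)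
    · calc f * g * e * (e * f) * (f * g * e) = f * (g * (e * f) * g) * e := by
            simp only [mul_assoc, he.mul_self_mul, hf.mul_self_mul]
        _ = f * g * e := by rw [hS.inv_mul_inv]
  have hg : IsIdempotentElem g :=
    calc g * g = f * (g * (e * f) * g) * e := by
          conv_lhs => rw [← hfge]
          simp only [mul_assoc]
      _ = g := by rw [hS.inv_mul_inv, hfge]
  have hef : e * f = inv g := hS.eq_inv g (e * f) (hS.inv_mul_inv _) (hS.mul_inv_mul _)
  rw [hef, hS.inv_eq_self hg]
  exact hg

theorem commute_of_isIdempotentElem (hS : IsInverseSemigroupInv inv) {e f : S}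
    (he : IsIdempotentElem e) (hf : IsIdempotentElem f) : Commute e f := by
  have hfe : f * e = inv (e * f) := by
    apply hS.eq_inv
    · calc e * f * (f * e) * (e * f) = (e * f) * (e * f) := by
            simp only [mul_assoc, he.mul_self_mul, hf.mul_self_mul]
        _ = e * f := hS.isIdempotentElem_mul he hf
    · calc f * e * (e * f) * (f * e) = (f * e) * (f * e) := by
            simp only [mul_assoc, he.mul_self_mul, hf.mul_self_mul]
        _ = f * e := hS.isIdempotentElem_mul hf he
  rw [Commute, SemiconjBy, hfe, hS.inv_eq_self (hS.isIdempotentElem_mul he hf)]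

theorem isIdempotentElem_inv_mul_self (hS : IsInverseSemigroupInv inv) (s : S) :
    IsIdempotentElem (inv s * s) :=
  calc inv s * s * (inv s * s) = inv s * (s * inv s * s) := by simp only [mul_assoc]
    _ = inv s * s := by rw [hS.mul_inv_mul]

theorem mul_mul_inv_mul_self (hS : IsInverseSemigroupInv inv) {s e : S} (he : IsIdempotentElem e) :
    s * e * (inv s * s) = s * e :=
  calc s * e * (inv s * s) = s * ((inv s * s) * e) := by
        rw [mul_assoc, (hS.commute_of_isIdempotentElem he (hS.isIdempotentElem_inv_mul_self s)).eq]
    _ = s * e := by rw [← mul_assoc, ← mul_assoc, hS.mul_inv_mul]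

theorem inv_mul_of_isIdempotentElem (hS : IsInverseSemigroupInv inv) (s : S) {e : S}
    (he : IsIdempotentElem e) : inv (s * e) = e * inv s := by
  have hcomm := (hS.commute_of_isIdempotentElem he (hS.isIdempotentElem_inv_mul_self s)).eq
  symm
  apply hS.eq_inv
  · calc s * e * (e * inv s) * (s * e) = s * e * (inv s * s) * e := by
          simp only [mul_assoc, he.mul_self_mul]
      _ = s * e := by rw [hS.mul_mul_inv_mul_self he, mul_assoc, he.eq]
  · calc e * inv s * (s * e) * (e * inv s) = e * ((inv s * s) * e) * inv s := by
          simp only [mul_assoc, he.mul_self_mul]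
      _ = e * inv s := by
          rw [← hcomm]
          simp only [mul_assoc, he.mul_self_mul, hS.inv_mul_inv]

theorem mul_mul_inv_mul_of_isIdempotentElem (hS : IsInverseSemigroupInv inv) (s : S) {e : S}
    (he : IsIdempotentElem e) : s * e * inv (s * e) * s = s * e :=
  calc s * e * inv (s * e) * s = s * e * (inv s * s) := by
        rw [hS.inv_mul_of_isIdempotentElem s he]
        simp only [mul_assoc, he.mul_self_mul]
    _ = s * e := hS.mul_mul_inv_mul_self he

theorem exists_mul_eq_mul_of_mul_eq_mul (hS : IsInverseSemigroupInv inv) {s t e : S}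
    (he : IsIdempotentElem e) (hst : s * e = t * e) : ∃ r : S, r * s = r * t := by
  refine ⟨s * e * inv (s * e), ?_⟩
  rw [hS.mul_mul_inv_mul_of_isIdempotentElem s he, hst,
    hS.mul_mul_inv_mul_of_isIdempotentElem t he]

end IsInverseSemigroupInv

/-- Let `μ : S → G` be the surjection of an inverse monoid `S` onto its maximum group
image `G`.  The comma category `J ↓ *_G` — whose objects are the elements `a ∈ G` and
whose morphisms `s : a → b` are the elements `s ∈ S` with `b * μ(s) = a`, composition
being multiplication in `S` — is filtered: it is nonempty, every pair of objects admits
morphisms to a common object, and every parallel pair of morphisms is equalized by a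
further morphism. -/
theorem comma_category_filtered {S G : Type*} [Monoid S] [Group G]
    (inv : S → S)
    (h1 : ∀ x : S, x * inv x * x = x)
    (h2 : ∀ x : S, inv x * x * inv x = inv x)
    (h3 : ∀ x y : S, x * y * x = x → y * x * y = y → y = inv x)
    (μ : S →* G) (hsurj : Function.Surjective μ)
    (hσ : ∀ a b : S, μ a = μ b ↔ ∃ e : S, e * e = e ∧ a * e = b * e) :
    Nonempty G ∧
    (∀ a b : G, ∃ (c : G) (s t : S), c * μ s = a ∧ c * μ t = b) ∧
    (∀ (a b : G) (s t : S), b * μ s = a → b * μ t = a →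
      ∃ (c : G) (r : S), c * μ r = b ∧ r * s = r * t) := by
  have hS : IsInverseSemigroupInv inv := ⟨h1, h2, h3⟩
  refine ⟨⟨1⟩, fun a b => ?_, fun a b s t hs ht => ?_⟩
  · obtain ⟨t, ht⟩ := hsurj (a⁻¹ * b)
    exact ⟨a, 1, t, by rw [map_one, mul_one], by rw [ht, mul_inv_cancel_left]⟩
  · obtain ⟨e, he, hse⟩ := (hσ s t).mp (mul_left_cancel (hs.trans ht.symm))
    obtain ⟨r, hr⟩ := hS.exists_mul_eq_mul_of_mul_eq_mul he hse
    exact ⟨b * (μ r)⁻¹, r, inv_mul_cancel_right _ _, hr⟩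
end

section
/- Let S be an inverse monoid with minimal idempotent ε, G its maximum group image with projection μ. In the comma category J ↓ *_G (objects a ∈ G, morphisms s : a → b iff b μ(s) = a), every pencil admits a commutative completion: given a family of morphisms s_i : a → a_i (i ∈ I), there exist morphisms r_i : a_i → c to a common object c with r_i ∘ s_i = r_j ∘ s_j for all i, j ∈ I (i.e., the category is strongly filtered). -/
/-!
The morphisms `r i := ε * inv (s i) : aa i → a * μ(ε)⁻¹` complete the pencil: since
`inv x * x` is idempotent and `ε` is below every idempotent, `ε * inv x * x = ε` for every
`x`, so all composites `r i * s i` equal `ε`.  They land in the right object because `μ`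
kills idempotents, whence `μ (inv x) = (μ x)⁻¹`.
-/

section PseudoInverse

variable {S : Type*} [Monoid S] {inv : S → S}

lemma isIdempotentElem_inv_mul_self (h1 : ∀ x : S, x * inv x * x = x) (x : S) :
    IsIdempotentElem (inv x * x) := by
  rw [IsIdempotentElem, mul_assoc, ← mul_assoc x, h1]

lemma MonoidHom.map_pseudoInverse {G : Type*} [Group G] (μ : S →* G)
    (h1 : ∀ x : S, x * inv x * x = x) (x : S) : μ (inv x) = (μ x)⁻¹ := by
  have hidem : μ (inv x * x) = 1 :=
    IsIdempotentElem.iff_eq_one.mp ((isIdempotentElem_inv_mul_self h1 x).map μ)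
  exact eq_inv_of_mul_eq_one_left (by rwa [← map_mul])

lemma mul_pseudoInverse_mul_eq_of_minimal (h1 : ∀ x : S, x * inv x * x = x) {ε : S}
    (hmin : ∀ e : S, IsIdempotentElem e → ε * e = ε) (x : S) : ε * inv x * x = ε := by
  rw [mul_assoc]
  exact hmin _ (isIdempotentElem_inv_mul_self h1 x)

end PseudoInverse

theorem comma_category_strongly_filtered_general {S G : Type*} [Monoid S] [Group G]
    (inv : S → S)
    (h1 : ∀ x : S, x * inv x * x = x)
    (ε : S)
    (hmin : ∀ e : S, e * e = e → ε * e = ε ∧ e * ε = ε)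
    (μ : S →* G)
    {I : Type*} (a : G) (aa : I → G) (s : I → S)
    (hs : ∀ i : I, aa i * μ (s i) = a) :
    ∃ (c : G) (r : I → S),
      (∀ i : I, c * μ (r i) = aa i) ∧ ∀ i j : I, r i * s i = r j * s j := by
  have hcomp (i : I) : ε * inv (s i) * s i = ε :=
    mul_pseudoInverse_mul_eq_of_minimal h1 (fun e he => (hmin e he).1) (s i)
  refine ⟨a * (μ ε)⁻¹, fun i => ε * inv (s i), fun i => ?_, fun i j => by rw [hcomp, hcomp]⟩
  rw [map_mul, μ.map_pseudoInverse h1, ← hs i]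
  group

/-- Let `S` be an inverse monoid with a minimal idempotent `ε`, and `μ : S → G` the
projection onto its maximum group image.  In the comma category `J ↓ *_G` (objects the
elements of `G`, morphisms `s : a → b` the elements `s ∈ S` with `b * μ(s) = a`,
composition being multiplication in `S`), every pencil admits a commutative completion:
given morphisms `s i : a → aa i` (`i ∈ I`), there are an object `c` and morphisms
`r i : aa i → c` with `r i ∘ s i = r j ∘ s j` for all `i, j`.  Hence `J ↓ *_G` is
strongly filtered. -/
theorem comma_category_strongly_filtered {S G : Type*} [Monoid S] [Group G]
    (inv : S → S)
    (h1 : ∀ x : S, x * inv x * x = x)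
    (h2 : ∀ x : S, inv x * x * inv x = inv x)
    (h3 : ∀ x y : S, x * y * x = x → y * x * y = y → y = inv x)
    (ε : S) (hε : ε * ε = ε)
    (hmin : ∀ e : S, e * e = e → ε * e = ε ∧ e * ε = ε)
    (μ : S →* G) (hsurj : Function.Surjective μ)
    (hσ : ∀ a b : S, μ a = μ b ↔ ∃ e : S, e * e = e ∧ a * e = b * e)
    {I : Type*} (a : G) (aa : I → G) (s : I → S)
    (hs : ∀ i : I, aa i * μ (s i) = a) :
    ∃ (c : G) (r : I → S),
      (∀ i : I, c * μ (r i) = aa i) ∧ ∀ i j : I, r i * s i = r j * s j :=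
  comma_category_strongly_filtered_general inv h1 ε hmin μ a aa s hs
end
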